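/- Let q ≥ 2 be a prime power and let 0 < p < 1. Consider random vectors in GF(q)^k whose entries are i.i.d., taking value 0 with probability p and each nonzero value with probability (1-p)/(q-1). If C is a (t+1) × k matrix over GF(q) whose first t rows are linearly independent (0 ≤ t ≤ k-1) and whose last row is such a random vector, then the probability that C is not full rank (i.e., the last row lies in the span of the first t rows) is at most max(p, (1-p)/(q-1))^(k-t). -/
import Mathlib

/-- Any submodule `V` of `Fin k → F` admits a set `S` of at most `finrank V`
coordinates such that vanishing on `S` forces a member of `V` to be `0`. -/
lemma aux_coords {F : Type*} [Field F] {k : ℕ} :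
    ∀ (n : ℕ) (V : Submodule F (Fin k → F)), Module.finrank F V ≤ n →
      ∃ S : Finset (Fin k), S.card ≤ Module.finrank F V ∧
        ∀ x ∈ V, (∀ i ∈ S, x i = 0) → x = 0 := by
  intro n
  induction n with
  | zero =>
      intro V hV
      have hbot : V = ⊥ := Submodule.finrank_eq_zero.mp (Nat.le_zero.mp hV)
      exact ⟨∅, by simp, by intro x hx _; simpa [hbot] using hx⟩
  | succ n ih =>
      intro V hV
      by_cases hbot : V = ⊥
      · exact ⟨∅, by simp, by intro x hx _; simpa [hbot] using hx⟩
      · obtain ⟨v, hvV, hv0⟩ := Submodule.exists_mem_ne_zero_of_ne_bot hbot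
        obtain ⟨i, hi⟩ : ∃ i, v i ≠ 0 := by
          by_contra h
          push_neg at h
          exact hv0 (funext h)
        set V' := V ⊓ LinearMap.ker (LinearMap.proj (R := F) (φ := fun _ : Fin k => F) i)
          with hV'
        have hlt : V' < V := by
          refine lt_of_le_of_ne inf_le_left ?_
          intro he
          have : v ∈ V' := he ▸ hvV
          exact hi this.2
        have hfr : Module.finrank F V' < Module.finrank F V :=
          Submodule.finrank_lt_finrank_of_lt hlt
        obtain ⟨S', hS'card, hS'⟩ := ih V' (by omega)
        refine ⟨insert i S', ?_, ?_⟩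
        · calc (insert i S').card ≤ S'.card + 1 := Finset.card_insert_le _ _
            _ ≤ Module.finrank F V' + 1 := by omega
            _ ≤ Module.finrank F V := by omega
        · intro x hx hxS
          have hxi : x i = 0 := hxS i (Finset.mem_insert_self _ _)
          have hx' : x ∈ V' := ⟨hx, hxi⟩
          exact hS' x hx' (fun j hj => hxS j (Finset.mem_insert_of_mem hj))

/-- Sparse random row: probability of falling in the span of `t` linearly
independent rows is at most `max p ((1-p)/(q-1)) ^ (k - t)`. -/
theorem stmt0 (q k t : ℕ) (F : Type*) [Field F] [Fintype F] [DecidableEq F]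
    (hcard : Fintype.card F = q) (hq : 2 ≤ q)
    (p : ℝ) (hp0 : 0 < p) (hp1 : p < 1)
    (hk : 1 ≤ k) (ht : t ≤ k - 1)
    (r : Fin t → (Fin k → F)) (hr : LinearIndependent F r)
    (w : F → ℝ) (hw0 : w 0 = p)
    (hwv : ∀ v : F, v ≠ 0 → w v = (1 - p) / ((q : ℝ) - 1)) :
    ∑ x : Fin k → F,
        Set.indicator {y : Fin k → F | y ∈ Submodule.span F (Set.range r)}
          (fun y => ∏ i, w (y i)) x
      ≤ (max p ((1 - p) / ((q : ℝ) - 1))) ^ (k - t) := by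
  classical
  set M := max p ((1 - p) / ((q : ℝ) - 1)) with hM
  have hq1 : (1 : ℝ) ≤ (q : ℝ) - 1 := by
    have : (2 : ℝ) ≤ (q : ℝ) := by exact_mod_cast hq
    linarith
  have hMpos : 0 < M := lt_of_lt_of_le hp0 (le_max_left _ _)
  have hM1 : M ≤ 1 := by
    refine max_le hp1.le ?_
    rw [div_le_one (by linarith)]
    linarith
  have hw_nonneg : ∀ v, 0 ≤ w v := by
    intro v
    by_cases h : v = 0
    · rw [h, hw0]; linarith
    · rw [hwv v h]; apply div_nonneg <;> linarith
  have hw_le : ∀ v, w v ≤ M := by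
    intro v
    by_cases h : v = 0
    · rw [h, hw0]; exact le_max_left _ _
    · rw [hwv v h]; exact le_max_right _ _
  have hw_sum : ∑ v : F, w v = 1 := by
    have h0 : (0 : F) ∈ (Finset.univ : Finset F) := Finset.mem_univ _
    rw [← Finset.add_sum_erase _ _ h0, hw0]
    have hc : ((Finset.univ : Finset F).erase 0).card = q - 1 := by
      rw [Finset.card_erase_of_mem h0, Finset.card_univ, hcard]
    have hsum : ∑ v ∈ (Finset.univ : Finset F).erase 0, w v
        = ((q - 1 : ℕ) : ℝ) * ((1 - p) / ((q : ℝ) - 1)) := by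
      rw [Finset.sum_congr rfl (fun v hv => hwv v (Finset.ne_of_mem_erase hv)),
        Finset.sum_const, hc, nsmul_eq_mul]
    rw [hsum]
    have hcast : ((q - 1 : ℕ) : ℝ) = (q : ℝ) - 1 := by
      have : 1 ≤ q := by omega
      push_cast [this]
      ring
    rw [hcast, mul_div_cancel₀ _ (by linarith : (q : ℝ) - 1 ≠ 0)]
    ring
  set V := Submodule.span F (Set.range r) with hV
  have hrank : Module.finrank F V = t := by
    rw [finrank_span_eq_card hr, Fintype.card_fin]
  obtain ⟨S, hScard, hSinj⟩ := aux_coords (Module.finrank F V) V le_rfl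
  have hScard' : S.card ≤ t := hrank ▸ hScard
  -- rewrite indicator sum as filtered sum
  have hLHS : ∑ x : Fin k → F,
      Set.indicator {y : Fin k → F | y ∈ V} (fun y => ∏ i, w (y i)) x
      = ∑ x ∈ Finset.univ.filter (fun x : Fin k → F => x ∈ V), ∏ i, w (x i) := by
    rw [Finset.sum_filter]
    refine Finset.sum_congr rfl fun x _ => ?_
    rw [Set.indicator_apply]
    simp [Set.mem_setOf_eq]
  rw [hLHS]
  set T := Finset.univ.filter (fun x : Fin k → F => x ∈ V) with hT
  -- split each product
  have hsplit : ∀ x : Fin k → F,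
      ∏ i, w (x i) = (∏ i ∈ S, w (x i)) * ∏ i ∈ Sᶜ, w (x i) :=
    fun x => (Finset.prod_mul_prod_compl S _).symm
  have hcomplbound : ∀ x : Fin k → F, ∏ i ∈ Sᶜ, w (x i) ≤ M ^ (k - t) := by
    intro x
    have h1 : ∏ i ∈ Sᶜ, w (x i) ≤ ∏ _i ∈ Sᶜ, M :=
      Finset.prod_le_prod (fun i _ => hw_nonneg _) (fun i _ => hw_le _)
    have h2 : (∏ _i ∈ Sᶜ, M) = M ^ (Sᶜ.card) := Finset.prod_const M
    have h3 : k - t ≤ Sᶜ.card := by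
      rw [Finset.card_compl, Fintype.card_fin]
      omega
    have h4 : M ^ (Sᶜ.card) ≤ M ^ (k - t) :=
      pow_le_pow_of_le_one hMpos.le hM1 h3
    calc ∏ i ∈ Sᶜ, w (x i) ≤ M ^ (Sᶜ.card) := h1.trans_eq h2
      _ ≤ M ^ (k - t) := h4
  have hstep1 : ∑ x ∈ T, ∏ i, w (x i)
      ≤ (∑ x ∈ T, ∏ i ∈ S, w (x i)) * M ^ (k - t) := by
    rw [Finset.sum_mul]
    refine Finset.sum_le_sum fun x _ => ?_
    rw [hsplit x]
    exact mul_le_mul_of_nonneg_left (hcomplbound x)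
      (Finset.prod_nonneg fun i _ => hw_nonneg _)
  -- bound the S-part sum by 1 via injectivity of restriction
  have hres_inj : Set.InjOn (fun x : Fin k → F => (fun i : S => x i.1)) T := by
    intro x hx y hy hxy
    have hxV : x ∈ V := (Finset.mem_filter.mp hx).2
    have hyV : y ∈ V := (Finset.mem_filter.mp hy).2
    have hsub : x - y ∈ V := Submodule.sub_mem _ hxV hyV
    have hvan : ∀ i ∈ S, (x - y) i = 0 := by
      intro i hiS
      have := congrFun hxy ⟨i, hiS⟩
      simpa [sub_eq_zero] using this
    have := hSinj (x - y) hsub hvan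
    exact sub_eq_zero.mp this
  have hSsum : ∑ x ∈ T, ∏ i ∈ S, w (x i) ≤ 1 := by
    have heq : ∀ x : Fin k → F, ∏ i ∈ S, w (x i) = ∏ i : S, w (x i.1) :=
      fun x => (Finset.prod_coe_sort S (fun i => w (x i))).symm
    calc ∑ x ∈ T, ∏ i ∈ S, w (x i)
        = ∑ x ∈ T, ∏ i : S, w (x i.1) := Finset.sum_congr rfl fun x _ => heq x
      _ = ∑ y ∈ T.image (fun x : Fin k → F => (fun i : S => x i.1)),
            ∏ i : S, w (y i) := by
          rw [Finset.sum_image (fun x hx y hy h => hres_inj hx hy h)]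
      _ ≤ ∑ y : S → F, ∏ i : S, w (y i) := by
          refine Finset.sum_le_sum_of_subset_of_nonneg (Finset.subset_univ _) ?_
          intro y _ _
          exact Finset.prod_nonneg fun i _ => hw_nonneg _
      _ = ∏ _i : S, ∑ v : F, w v := by
          rw [Finset.prod_univ_sum]
          rw [← Fintype.piFinset_univ]
      _ = 1 := by rw [hw_sum]; simp
  calc ∑ x ∈ T, ∏ i, w (x i)
      ≤ (∑ x ∈ T, ∏ i ∈ S, w (x i)) * M ^ (k - t) := hstep1
    _ ≤ 1 * M ^ (k - t) :=
        mul_le_mul_of_nonneg_right hSsum (by positivity)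
    _ = M ^ (k - t) := one_mul _
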